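/- Let p, q be natural numbers, each not divisible by 2, not divisible by 3 and not equal to 1, with gcd(p,q) = 1. Then for every integer k with 1 ≤ k ≤ p − 1, the complex number cos(πk/p) does not belong to the subfield ℚ(e^{iπ/q}) of ℂ, i.e. cos(πk/p) is not in the smallest subfield of ℂ containing ℚ and e^{iπ/q}. -/

import Mathlib

/-!
Since `p` is odd, `-e^{iπ/p}` is a primitive `p`-th root of unity, so `cos(πk/p)` lies in the
cyclotomic field `ℚ(ζ_p)`. As `2q` and `p` are coprime, `ℚ(ζ_{2q})` and `ℚ(ζ_p)` have degrees
multiplying to that of their compositum `ℚ(ζ_{2pq})`, so they are linearly disjoint and meet in `ℚ`.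
Hence `cos(πk/p)` would be rational; but the denominator of `k/p` is a divisor of `p` other than
`1`, hence coprime to `6` and larger than `3`, so Niven's theorem makes `cos(πk/p)` irrational.
-/

open Real Complex IntermediateField Polynomial

namespace IsPrimitiveRoot

theorem neg_of_odd {R : Type*} [CommRing R] [NoZeroDivisors R] {ζ : R} {n : ℕ}
    (hζ : IsPrimitiveRoot ζ (2 * n)) (hn : Odd n) : IsPrimitiveRoot (-ζ) n := by
  have hζn : ζ ^ n = -1 :=
    (hζ.pow (by positivity [hn.pos]) (mul_comm 2 n)).eq_neg_one_of_two_right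
  refine ⟨by rw [neg_pow, hζn, hn.neg_one_pow, neg_one_mul, neg_neg], fun l hl => ?_⟩
  have : ζ ^ (2 * l) = 1 := by rw [pow_mul, ← neg_sq, ← pow_mul, mul_comm, pow_mul, hl, one_pow]
  exact Nat.dvd_of_mul_dvd_mul_left two_pos (hζ.dvd_of_pow_eq_one _ this)

variable {K : Type*} [Field K] [CharZero K] {m n : ℕ}

theorem finrank_adjoin_rat {ζ : K} (hζ : IsPrimitiveRoot ζ n) (hn : 0 < n) :
    Module.finrank ℚ ℚ⟮ζ⟯ = n.totient := by
  rw [adjoin.finrank ((hζ.isIntegral hn).tower_top (A := ℚ)), ← cyclotomic_eq_minpoly_rat hζ hn,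
    natDegree_cyclotomic]

theorem adjoin_rat_inf_adjoin_rat_eq_bot {μ ν : K} (hμ : IsPrimitiveRoot μ m)
    (hν : IsPrimitiveRoot ν n) (hm : 0 < m) (hn : 0 < n) (hmn : m.Coprime n) :
    ℚ⟮μ⟯ ⊓ ℚ⟮ν⟯ = ⊥ := by
  have := adjoin.finiteDimensional ((hμ.isIntegral hm).tower_top (A := ℚ))
  have := adjoin.finiteDimensional ((hν.isIntegral hn).tower_top (A := ℚ))
  refine (LinearDisjoint.of_finrank_sup (le_antisymm (finrank_sup_le _ _) ?_)).inf_eq_bot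
  rw [hμ.finrank_adjoin_rat hm, hν.finrank_adjoin_rat hn, ← Nat.totient_mul hmn,
    ← hmn.lcm_eq_mul]
  have hμ' : IsPrimitiveRoot (⟨μ, (le_sup_left : ℚ⟮μ⟯ ≤ _) (mem_adjoin_simple_self ℚ μ)⟩ :
      ↥(ℚ⟮μ⟯ ⊔ ℚ⟮ν⟯)) m := coe_submonoidClass_iff.mp hμ
  have hν' : IsPrimitiveRoot (⟨ν, (le_sup_right : ℚ⟮ν⟯ ≤ _) (mem_adjoin_simple_self ℚ ν)⟩ :
      ↥(ℚ⟮μ⟯ ⊔ ℚ⟮ν⟯)) n := coe_submonoidClass_iff.mp hν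
  exact hμ'.lcm_totient_le_finrank hν' (cyclotomic.irreducible_rat (Nat.lcm_pos hm hn))

end IsPrimitiveRoot

theorem Complex.isPrimitiveRoot_exp_pi_mul_I_div {n : ℕ} (hn : n ≠ 0) :
    IsPrimitiveRoot (exp (π * I / n)) (2 * n) := by
  convert isPrimitiveRoot_exp (2 * n) (by positivity) using 2
  push_cast
  field_simp

theorem Complex.ofReal_cos_mem_adjoin_exp (θ : ℝ) : (Real.cos θ : ℂ) ∈ ℚ⟮exp (θ * I)⟯ := by
  have hw := mem_adjoin_simple_self ℚ (exp (θ * I))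
  have h : (Real.cos θ : ℂ) = (exp (θ * I) + (exp (θ * I))⁻¹) / 2 := by
    rw [ofReal_cos, ← exp_neg, ← neg_mul, ← two_cos]
    ring
  rw [h]
  exact div_mem (add_mem hw (inv_mem hw)) (ofNat_mem _ 2)

theorem irrational_cos_pi_mul_div {p k : ℕ} (hp2 : ¬ 2 ∣ p) (hp3 : ¬ 3 ∣ p) (hk : ¬ p ∣ k) :
    Irrational (Real.cos (π * k / p)) := by
  have hp0 : p ≠ 0 := by rintro rfl; exact hp2 (dvd_zero 2)
  set r : ℚ := k / p
  have hden_dvd : r.den ∣ p := by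
    simpa [r, div_eq_mul_inv, Rat.inv_natCast_den, hp0] using Rat.mul_den_dvd (k : ℚ) (p : ℚ)⁻¹
  have hden_ne_one : r.den ≠ 1 := by rwa [Ne, Rat.den_div_natCast_eq_one_iff k p hp0]
  have hden : 3 < r.den := by
    by_contra! h
    interval_cases r.den <;> simp_all
  convert irrational_cos_rat_mul_pi hden using 2
  push_cast [r]
  ring

theorem ofReal_cos_pi_mul_div_mem_adjoin (p k : ℕ) :
    (Real.cos (π * k / p) : ℂ) ∈ ℚ⟮-exp (π * I / p)⟯ := by
  refine adjoin_simple_le_iff.mpr ?_ (ofReal_cos_mem_adjoin_exp _)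
  have hw : exp (π * I / p) ∈ ℚ⟮-exp (π * I / p)⟯ := by
    simpa using neg_mem (mem_adjoin_simple_self ℚ (-exp (π * I / p)))
  have h : exp ((π * k / p : ℝ) * I) = exp (π * I / p) ^ k := by
    rw [← Complex.exp_nat_mul]
    push_cast
    ring_nf
  rw [h]
  exact pow_mem hw k

theorem stmt_3 (p q : ℕ)
    (hp2 : ¬ (2 ∣ p)) (hp3 : ¬ (3 ∣ p))
    (hpq : Nat.Coprime p q)
    (k : ℕ) (hk1 : 1 ≤ k) (hk2 : k ≤ p - 1) :
    (↑(Real.cos (π * k / p)) : ℂ) ∉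
      IntermediateField.adjoin ℚ {Complex.exp ((π : ℂ) * Complex.I / q)} := by
  intro hmem
  have hp_odd : Odd p := Nat.odd_iff.mpr (Nat.two_dvd_ne_zero.mp hp2)
  have hq0 : q ≠ 0 := by rintro rfl; rw [Nat.coprime_zero_right] at hpq; omega
  have hμ := isPrimitiveRoot_exp_pi_mul_I_div hq0
  have hν := (isPrimitiveRoot_exp_pi_mul_I_div hp_odd.pos.ne').neg_of_odd hp_odd
  have hcop : (2 * q).Coprime p := Nat.Coprime.mul_left (Nat.coprime_two_left.mpr hp_odd) hpq.symm
  have hrat : (Real.cos (π * k / p) : ℂ) ∈ (⊥ : IntermediateField ℚ ℂ) := by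
    rw [← hμ.adjoin_rat_inf_adjoin_rat_eq_bot hν (by omega) hp_odd.pos hcop]
    exact ⟨hmem, ofReal_cos_pi_mul_div_mem_adjoin p k⟩
  obtain ⟨r, hr⟩ := mem_bot.mp hrat
  refine (irrational_cos_pi_mul_div hp2 hp3 (Nat.not_dvd_of_pos_of_lt hk1 (by omega))).ne_rat r ?_
  rw [eq_ratCast] at hr
  exact_mod_cast hr.symm
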